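/- arXiv:1502.00591 — 6 statements merged into one kernel-verified Lean document; each statement's English description precedes it below -/
import Mathlib

section
/- Let A be a Banach algebra with a bounded approximate identity which is generated as a Banach space by its idempotents (i.e., the closed linear span of {p ∈ A : p² = p} equals A), and let X be a right Banach A-module. Then every approximately local left multiplier S : A → X is a left multiplier, i.e., S(ab) = S(a)·b for all a, b ∈ A. -/
open Filter Topology

/-- A bounded approximate identity for a normed ring `A`: a bounded net `(e i)`
indexed by a directed preorder with `e i * a → a` and `a * e i → a` for all `a`. -/
structure BoundedApproxId (A : Type*) [NormedRing A] where
  ι : Type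
  [pre : Preorder ι]
  [dir : IsDirected ι (· ≤ ·)]
  [ne : Nonempty ι]
  e : ι → A
  bdd : ∃ M : ℝ, ∀ i, ‖e i‖ ≤ M
  tendsto_left : ∀ a : A, Tendsto (fun i => e i * a) atTop (𝓝 a)
  tendsto_right : ∀ a : A, Tendsto (fun i => a * e i) atTop (𝓝 a)

/-- If a Banach algebra `A` with a bounded approximate identity is generated as a
Banach space by its idempotents, and `X` is a right Banach `A`-module, then every
approximately local left multiplier `S : A → X` is a left multiplier. -/
theorem approx_local_left_multiplier_is_multiplier
    {A : Type*} [NormedRing A] [NormedAlgebra ℂ A] [CompleteSpace A]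
    {X : Type*} [NormedAddCommGroup X] [NormedSpace ℂ X] [CompleteSpace X]
    -- right Banach `A`-module structure on `X`
    (act : X → A → X)
    (act_add : ∀ x y a, act (x + y) a = act x a + act y a)
    (act_add' : ∀ x a b, act x (a + b) = act x a + act x b)
    (act_smul : ∀ (c : ℂ) x a, act (c • x) a = c • act x a)
    (act_smul' : ∀ (c : ℂ) x a, act x (c • a) = c • act x a)
    (act_mul : ∀ x a b, act (act x a) b = act x (a * b))
    (act_norm : ∀ x a, ‖act x a‖ ≤ ‖x‖ * ‖a‖)
    -- `A` has a bounded approximate identity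
    (bai : BoundedApproxId A)
    -- `A` is generated as a Banach space by its idempotents
    (hidem : closure (Submodule.span ℂ {p : A | p * p = p} : Set A) = Set.univ)
    -- `S` is a bounded linear approximately local left multiplier
    (S : A →L[ℂ] X)
    (hS : ∀ a : A, S a ∈ closure {y : X | ∃ x : X, y = act x a}) :
    ∀ a b : A, S (a * b) = act (S a) b := by
  -- basic consequences of the module axioms
  have act_zero' : ∀ x : X, act x 0 = 0 := by
    intro x
    have h := act_smul' 0 x 0
    simpa using h
  -- continuity of the action in each variable
  have contL : ∀ b : A, Continuous fun y : X => act y b := by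
    intro b
    let f : X →ₗ[ℂ] X :=
      { toFun := fun y => act y b
        map_add' := fun y z => act_add y z b
        map_smul' := fun c y => act_smul c y b }
    exact (f.mkContinuous ‖b‖ (fun y =>
      (act_norm y b).trans_eq (mul_comm _ _))).continuous
  have contR : ∀ x : X, Continuous fun b : A => act x b := by
    intro x
    let f : A →ₗ[ℂ] X :=
      { toFun := fun b => act x b
        map_add' := fun b c => act_add' x b c
        map_smul' := fun c b => act_smul' c x b }
    exact (f.mkContinuous ‖x‖ (fun b => act_norm x b)).continuous
  -- key step: for an idempotent `q`, `S (a * q) = act (S a) q`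
  have key : ∀ (a q : A), q * q = q → S (a * q) = act (S a) q := by
    intro a q hq
    have h1 : act (S (a * q)) q = S (a * q) := by
      have hsub : {y : X | ∃ x : X, y = act x (a * q)} ⊆ {y : X | act y q = y} := by
        rintro y ⟨x, rfl⟩
        show act (act x (a * q)) q = act x (a * q)
        rw [act_mul, mul_assoc, hq]
      have hcl : IsClosed {y : X | act y q = y} :=
        isClosed_eq (contL q) continuous_id
      exact (closure_minimal hsub hcl) (hS (a * q))
    have h2 : act (S (a - a * q)) q = 0 := by
      have hsub : {y : X | ∃ x : X, y = act x (a - a * q)} ⊆ {y : X | act y q = 0} := by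
        rintro y ⟨x, rfl⟩
        show act (act x (a - a * q)) q = 0
        have hz : (a - a * q) * q = 0 := by
          rw [sub_mul, mul_assoc, hq, sub_self]
        rw [act_mul, hz, act_zero']
      have hcl : IsClosed {y : X | act y q = 0} :=
        isClosed_eq (contL q) continuous_const
      exact (closure_minimal hsub hcl) (hS (a - a * q))
    have hsum : S a = S (a * q) + S (a - a * q) := by
      have : a * q + (a - a * q) = a := by abel
      rw [← map_add, this]
    symm
    calc act (S a) q = act (S (a * q)) q + act (S (a - a * q)) q := by
          rw [hsum, act_add]
      _ = S (a * q) + 0 := by rw [h1, h2]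
      _ = S (a * q) := by rw [add_zero]
  -- now extend from idempotents to all of `A` by linearity and density
  intro a b
  let V : Submodule ℂ A :=
    { carrier := {b : A | S (a * b) = act (S a) b}
      add_mem' := by
        intro x y hx hy
        show S (a * (x + y)) = act (S a) (x + y)
        rw [mul_add, map_add, act_add', hx, hy]
      zero_mem' := by
        show S (a * 0) = act (S a) 0
        rw [mul_zero, map_zero, act_zero']
      smul_mem' := by
        intro c x hx
        show S (a * (c • x)) = act (S a) (c • x)
        rw [mul_smul_comm, map_smul, act_smul', hx] }
  have hVc : IsClosed (V : Set A) :=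
    isClosed_eq (S.continuous.comp (continuous_const.mul continuous_id)) (contR (S a))
  have hspan : (Submodule.span ℂ {p : A | p * p = p} : Set A) ⊆ (V : Set A) := by
    exact_mod_cast Submodule.span_le.mpr fun q hq => key a q hq
  have hb : b ∈ closure (Submodule.span ℂ {p : A | p * p = p} : Set A) := by
    rw [hidem]; trivial
  exact hVc.closure_subset (closure_mono hspan hb)
end

section
/- Let A be a unital Banach algebra, X a unital Banach A-bimodule, and δ : A → X a bounded approximately local derivation. Then δ(PQ) = δ(P)·Q + P·δ(Q) for all idempotents P, Q ∈ A. -/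
/-! For idempotents `P, Q`, each Peirce corner `e · (δ(PQ) - δ(P)Q - Pδ(Q)) · f`, with
`e ∈ {P, 1 - P}` and `f ∈ {Q, 1 - Q}`, equals `e · δ(c) · f` for a single element `c`
(respectively `PQ - P - Q`, `PQ - Q`, `PQ - P`, `PQ`) that does not depend on the linear map `δ`.
It vanishes when `δ` is a derivation, and being a continuous function of the one value `δ(c)`, it
therefore vanishes for every approximately local derivation. An element of a unital bimodule is
the sum of its four corners. -/

open MulOpposite

section Algebra

variable {A X : Type*} [Ring A] [AddCommGroup X] [Module A X] [Module Aᵐᵒᵖ X]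

def IsDerivation (d : A → X) : Prop :=
  ∀ u v, d (u * v) = op v • d u + u • d v

def leibnizDefect (δ : A → X) (P Q : A) : X :=
  δ (P * Q) - (op Q • δ P + P • δ Q)

theorem IsDerivation.leibnizDefect_eq_zero {d : A → X} (hd : IsDerivation d) (P Q : A) :
    leibnizDefect d P Q = 0 :=
  sub_eq_zero.mpr (hd P Q)

theorem eq_zero_of_forall_corner_eq_zero (P Q : A) {x : X}
    (h : ∀ a ∈ ({P, 1 - P} : Set A), ∀ b ∈ ({Q, 1 - Q} : Set A), a • op b • x = 0) :
    x = 0 := by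
  simp only [Set.mem_insert_iff, Set.mem_singleton_iff, forall_eq_or_imp, forall_eq] at h
  obtain ⟨⟨hPQ, hPQ'⟩, hP'Q, hP'Q'⟩ := h
  calc x = (P + (1 - P)) • (op Q + op (1 - Q)) • x := by
        rw [add_sub_cancel, ← op_add, add_sub_cancel, op_one, one_smul, one_smul]
    _ = 0 := by
        rw [add_smul, add_smul, smul_add, smul_add, hPQ, hPQ', hP'Q, hP'Q', add_zero, add_zero]

theorem forall_corner_leibnizDefect_eq [SMulCommClass A Aᵐᵒᵖ X] {F : Type*} [FunLike F A X]
    [AddMonoidHomClass F A X] {P Q : A} (hP : IsIdempotentElem P) (hQ : IsIdempotentElem Q) :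
    ∀ a ∈ ({P, 1 - P} : Set A), ∀ b ∈ ({Q, 1 - Q} : Set A),
      ∃ c, ∀ δ : F, a • op b • leibnizDefect δ P Q = a • op b • δ c := by
  have hPc : (1 - P) * P = 0 := hP.one_sub_mul_self
  have hQc : Q * (1 - Q) = 0 := hQ.mul_one_sub_self
  simp only [Set.mem_insert_iff, Set.mem_singleton_iff, forall_eq_or_imp, forall_eq]
  refine ⟨⟨⟨P * Q - P - Q, fun δ => ?_⟩, ⟨P * Q - Q, fun δ => ?_⟩⟩,
    ⟨P * Q - P, fun δ => ?_⟩, ⟨P * Q, fun δ => ?_⟩⟩ <;>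
  simp only [leibnizDefect, map_sub, smul_sub, smul_add, smul_smul, smul_comm _ (op _), ← op_mul,
    hP.eq, hQ.eq, hPc, hQc, op_zero, zero_smul, smul_zero] <;>
  abel

end Algebra

section Approximation

variable {A X : Type*} [Ring A] [AddCommGroup X] [Module A X] [Module Aᵐᵒᵖ X]
  [TopologicalSpace X]

def IsApproxLocalDerivation (F : Type*) [FunLike F A X] (δ : A → X) : Prop :=
  ∀ c, δ c ∈ closure {y | ∃ d : F, IsDerivation d ∧ y = d c}

variable [ContinuousConstSMul A X] [ContinuousConstSMul Aᵐᵒᵖ X] [T1Space X]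

theorem IsApproxLocalDerivation.smul_op_smul_eq_zero {F : Type*} [FunLike F A X] {δ : A → X}
    (hδ : IsApproxLocalDerivation F δ) {a b c : A}
    (h : ∀ d : F, IsDerivation d → a • op b • d c = 0) : a • op b • δ c = 0 := by
  have hclosed : IsClosed {x : X | a • op b • x = 0} :=
    isClosed_singleton.preimage ((continuous_const_smul a).comp (continuous_const_smul (op b)))
  refine closure_minimal ?_ hclosed (hδ c)
  rintro _ ⟨d, hd, rfl⟩
  exact h d hd

theorem IsApproxLocalDerivation.leibnizDefect_eq_zero [SMulCommClass A Aᵐᵒᵖ X] {F : Type*}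
    [FunLike F A X] [AddMonoidHomClass F A X] {δ : F} (hδ : IsApproxLocalDerivation F δ)
    {P Q : A} (hP : IsIdempotentElem P) (hQ : IsIdempotentElem Q) :
    leibnizDefect δ P Q = 0 := by
  refine eq_zero_of_forall_corner_eq_zero P Q fun a ha b hb => ?_
  obtain ⟨c, hc⟩ := forall_corner_leibnizDefect_eq (F := F) hP hQ a ha b hb
  rw [hc]
  exact hδ.smul_op_smul_eq_zero fun d hd => by
    rw [← hc, hd.leibnizDefect_eq_zero, smul_zero, smul_zero]

end Approximation

theorem approx_local_derivation_on_idempotents_general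
    {A : Type*} [NormedRing A] [NormedAlgebra ℂ A]
    {X : Type*} [NormedAddCommGroup X] [NormedSpace ℂ X]
    -- Banach `A`-bimodule structure on `X`: left action `l`, right action `r`
    (l : A → X → X) (r : X → A → X)
    (l_add : ∀ a b x, l (a + b) x = l a x + l b x)
    (l_add' : ∀ a x y, l a (x + y) = l a x + l a y)
    (l_mul : ∀ a b x, l (a * b) x = l a (l b x))
    (r_add : ∀ x y a, r (x + y) a = r x a + r y a)
    (r_add' : ∀ x a b, r x (a + b) = r x a + r x b)
    (r_mul : ∀ x a b, r (r x a) b = r x (a * b))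
    (lr_comm : ∀ a x b, r (l a x) b = l a (r x b))
    (l_norm : ∀ a x, ‖l a x‖ ≤ ‖a‖ * ‖x‖)
    (r_norm : ∀ x a, ‖r x a‖ ≤ ‖x‖ * ‖a‖)
    -- the bimodule is unital
    (l_one : ∀ x, l 1 x = x)
    (r_one : ∀ x, r x 1 = x)
    -- `δ` is a bounded approximately local derivation
    (δ : A →L[ℂ] X)
    (hδ : ∀ a : A, δ a ∈ closure {y : X | ∃ d : A →L[ℂ] X,
        (∀ u v : A, d (u * v) = r (d u) v + l u (d v)) ∧ y = d a}) :
    ∀ P Q : A, P * P = P → Q * Q = Q →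
      δ (P * Q) = r (δ P) Q + l P (δ Q) := by
  let : SMul A X := ⟨l⟩
  let : Module A X := .ofMinimalAxioms l_add' l_add l_mul l_one
  let : SMul Aᵐᵒᵖ X := ⟨fun b x => r x b.unop⟩
  let : Module Aᵐᵒᵖ X := .ofMinimalAxioms (fun b x y => r_add x y b.unop)
    (fun b b' x => r_add' x b.unop b'.unop) (fun b b' x => (r_mul x b'.unop b.unop).symm) r_one
  have : SMulCommClass A Aᵐᵒᵖ X := ⟨fun a b x => (lr_comm a x b.unop).symm⟩
  have : IsBoundedSMul A X := .of_norm_smul_le l_norm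
  have : IsBoundedSMul Aᵐᵒᵖ X :=
    .of_norm_smul_le fun b x => (r_norm x b.unop).trans_eq (mul_comm _ _)
  intro P Q hP hQ
  exact sub_eq_zero.mp (IsApproxLocalDerivation.leibnizDefect_eq_zero hδ hP hQ)

/-- If `A` is a unital Banach algebra, `X` a unital Banach `A`-bimodule and
`δ : A → X` a bounded approximately local derivation, then
`δ (P * Q) = δ P • Q + P • δ Q` for all idempotents `P, Q ∈ A`. -/
theorem approx_local_derivation_on_idempotents
    {A : Type*} [NormedRing A] [NormedAlgebra ℂ A] [CompleteSpace A]
    {X : Type*} [NormedAddCommGroup X] [NormedSpace ℂ X] [CompleteSpace X]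
    -- Banach `A`-bimodule structure on `X`: left action `l`, right action `r`
    (l : A → X → X) (r : X → A → X)
    (l_add : ∀ a b x, l (a + b) x = l a x + l b x)
    (l_add' : ∀ a x y, l a (x + y) = l a x + l a y)
    (l_smul : ∀ (c : ℂ) a x, l (c • a) x = c • l a x)
    (l_smul' : ∀ (c : ℂ) a x, l a (c • x) = c • l a x)
    (l_mul : ∀ a b x, l (a * b) x = l a (l b x))
    (r_add : ∀ x y a, r (x + y) a = r x a + r y a)
    (r_add' : ∀ x a b, r x (a + b) = r x a + r x b)
    (r_smul : ∀ (c : ℂ) x a, r (c • x) a = c • r x a)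
    (r_smul' : ∀ (c : ℂ) x a, r x (c • a) = c • r x a)
    (r_mul : ∀ x a b, r (r x a) b = r x (a * b))
    (lr_comm : ∀ a x b, r (l a x) b = l a (r x b))
    (l_norm : ∀ a x, ‖l a x‖ ≤ ‖a‖ * ‖x‖)
    (r_norm : ∀ x a, ‖r x a‖ ≤ ‖x‖ * ‖a‖)
    -- the bimodule is unital
    (l_one : ∀ x, l 1 x = x)
    (r_one : ∀ x, r x 1 = x)
    -- `δ` is a bounded approximately local derivation
    (δ : A →L[ℂ] X)
    (hδ : ∀ a : A, δ a ∈ closure {y : X | ∃ d : A →L[ℂ] X,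
        (∀ u v : A, d (u * v) = r (d u) v + l u (d v)) ∧ y = d a}) :
    ∀ P Q : A, P * P = P → Q * Q = Q →
      δ (P * Q) = r (δ P) Q + l P (δ Q) :=
  approx_local_derivation_on_idempotents_general l r l_add l_add' l_mul r_add r_add' r_mul lr_comm
    l_norm r_norm l_one r_one δ hδ
end

section
/- Let 𝔄 = {λ·1 + μ·E₁₂ : λ, μ ∈ ℂ} ⊆ M₂(ℂ), where E₁₂ is the standard matrix unit and 1 the identity matrix, and define S : 𝔄 → 𝔄 by S(λ·1 + μ·E₁₂) = λ·1 + 2μ·E₁₂. Then S is a local left multiplier: for every A ∈ 𝔄 there exists B ∈ 𝔄 with S(A) = B·A. -/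
/-!
Since `N = E₁₂` squares to zero, products in `𝔄` follow `(c + dN)(a + bN) = ca + (cb + da)N`.
For `a ≠ 0` the multiplier `B = 1 + (b/a)N` doubles the nilpotent part of `A = a + bN`;
for `a = 0` take `B = 2`.
-/

/-- The standard matrix unit `E₁₂` in `M₂(ℂ)`. -/
def E₁₂ : Matrix (Fin 2) (Fin 2) ℂ := Matrix.single 0 1 1

section SquareZero

variable {K A : Type*} [Semiring A] {N : A}

theorem smul_one_add_smul_mul_smul_one_add_smul [CommSemiring K] [Algebra K A] (hN : N * N = 0)
    (a b c d : K) :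
    (c • (1 : A) + d • N) * (a • 1 + b • N) = (c * a) • 1 + (c * b + d * a) • N := by
  simp only [add_mul, mul_add, smul_mul_smul_comm, one_mul, mul_one, hN, smul_zero, add_zero]
  module

theorem exists_smul_one_add_smul_mul_eq [Field K] [Algebra K A] (hN : N * N = 0) (a b : K) :
    ∃ c d : K, a • (1 : A) + (2 * b) • N = (c • 1 + d • N) * (a • 1 + b • N) := by
  rcases eq_or_ne a 0 with rfl | ha
  · exact ⟨2, 0, by rw [smul_one_add_smul_mul_smul_one_add_smul hN]; simp⟩
  · refine ⟨1, b / a, ?_⟩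
    rw [smul_one_add_smul_mul_smul_one_add_smul hN, div_mul_cancel₀ b ha, one_mul, one_mul, two_mul]

end SquareZero

theorem E₁₂_mul_self : E₁₂ * E₁₂ = 0 := by
  simp [E₁₂]

/-- On `𝔄 = {λ·1 + μ·E₁₂}`, the map `S(λ·1 + μ·E₁₂) = λ·1 + 2μ·E₁₂` is a local
left multiplier: for every `A ∈ 𝔄` there exists `B ∈ 𝔄` with `S A = B * A`. -/
theorem S_is_local_left_multiplier :
    ∀ lam mu : ℂ, ∃ lam' mu' : ℂ,
      lam • (1 : Matrix (Fin 2) (Fin 2) ℂ) + (2 * mu) • E₁₂ =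
        (lam' • 1 + mu' • E₁₂) * (lam • 1 + mu • E₁₂) :=
  exists_smul_one_add_smul_mul_eq E₁₂_mul_self
end

section
/- Let N = E₁₂ + E₂₃ ∈ M₃(ℂ), let 𝔅 = {λ·1 + μ·N + ν·N² : λ, μ, ν ∈ ℂ}, and define δ : 𝔅 → 𝔅 by δ(λ·1 + μ·N + ν·N²) = ν·N². Then δ is a local derivation: for every X ∈ 𝔅 there exists a derivation d of 𝔅 (a linear map d : 𝔅 → 𝔅 with d(YZ) = d(Y)Z + Y d(Z) for all Y, Z ∈ 𝔅) such that δ(X) = d(X). -/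
/-!
`𝔅 ≅ ℂ[x]/(x³)`, and a derivation `D` of it is determined by `D N = aN + bN²` (it has to kill
`N³ = 0`), which forces `D N² = 2aN²`. Thus `D(λ + μN + νN²) = μaN + (μb + 2aν)N²`. To hit `νN²`
take `a = 0, b = ν/μ` when `μ ≠ 0`, and `a = 1/2` when `μ = 0`.
-/

/-- The nilpotent matrix `N = E₁₂ + E₂₃` in `M₃(ℂ)`. -/
def Nmat : Matrix (Fin 3) (Fin 3) ℂ :=
  Matrix.single 0 1 1 + Matrix.single 1 2 1

/-- The set `𝔅 = {λ·1 + μ·N + ν·N² : λ, μ, ν ∈ ℂ} ⊆ M₃(ℂ)`. -/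
def frakB : Set (Matrix (Fin 3) (Fin 3) ℂ) :=
  {M | ∃ lam mu nu : ℂ, M = lam • 1 + mu • Nmat + nu • Nmat ^ 2}

section TruncatedPolynomial

variable {R A : Type*} [CommSemiring R] [Semiring A] [Algebra R A]

def truncEval (x : A) (l m n : R) : A := l • 1 + m • x + n • x ^ 2

theorem truncEval_add (x : A) (l m n l' m' n' : R) :
    truncEval x l m n + truncEval x l' m' n' = truncEval x (l + l') (m + m') (n + n') := by
  simp only [truncEval, add_smul]
  abel

theorem truncEval_mul {x : A} (hx : x ^ 3 = 0) (l m n l' m' n' : R) :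
    truncEval x l m n * truncEval x l' m' n' =
      truncEval x (l * l') (l * m' + m * l') (l * n' + m * m' + n * l') := by
  have h11 : x * x = x ^ 2 := (sq x).symm
  have h12 : x * x ^ 2 = 0 := by rw [← pow_succ', hx]
  have h21 : x ^ 2 * x = 0 := by rw [← pow_succ, hx]
  have h22 : x ^ 2 * x ^ 2 = 0 := by rw [← pow_add, pow_succ, hx, zero_mul]
  simp only [truncEval, add_mul, mul_add, smul_mul_smul, one_mul, mul_one, h11, h12, h21, h22,
    smul_zero]
  module

end TruncatedPolynomial

theorem mem_frakB_iff {M : Matrix (Fin 3) (Fin 3) ℂ} :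
    M ∈ frakB ↔ ∃ l m n : ℂ, M = truncEval Nmat l m n := Iff.rfl

theorem Nmat_pow_three : Nmat ^ 3 = 0 := by
  ext i j
  fin_cases i <;> fin_cases j <;>
    simp [Nmat, pow_succ, Matrix.mul_apply, Matrix.single_apply]

theorem truncEval_Nmat_apply_zero_one (l m n : ℂ) : truncEval Nmat l m n 0 1 = m := by
  simp [truncEval, Nmat, sq, Matrix.mul_apply, Matrix.single_apply]

theorem truncEval_Nmat_apply_zero_two (l m n : ℂ) : truncEval Nmat l m n 0 2 = n := by
  simp [truncEval, Nmat, sq, Matrix.mul_apply, Matrix.single_apply]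

/-- On `frakB` the entries `(0, 1)` and `(0, 2)` are the coordinates `μ` and `ν`, so this is the
derivation of `𝔅` with `N ↦ aN + bN²`, hence `N² ↦ 2aN²`, extended linearly to all matrices. -/
noncomputable def derivN (a b : ℂ) : Matrix (Fin 3) (Fin 3) ℂ →ₗ[ℂ] Matrix (Fin 3) (Fin 3) ℂ :=
  (Matrix.entryLinearMap ℂ ℂ 0 1).smulRight (a • Nmat + b • Nmat ^ 2) +
    (Matrix.entryLinearMap ℂ ℂ 0 2).smulRight ((2 * a) • Nmat ^ 2)

theorem derivN_truncEval (a b l m n : ℂ) :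
    derivN a b (truncEval Nmat l m n) = truncEval Nmat 0 (m * a) (m * b + 2 * a * n) := by
  simp only [derivN, LinearMap.add_apply, LinearMap.smulRight_apply,
    Matrix.entryLinearMap_apply, truncEval_Nmat_apply_zero_one, truncEval_Nmat_apply_zero_two]
  unfold truncEval
  module

theorem mapsTo_derivN (a b : ℂ) : Set.MapsTo (derivN a b) frakB frakB := by
  intro M hM
  obtain ⟨l, m, n, rfl⟩ := mem_frakB_iff.1 hM
  exact mem_frakB_iff.2 ⟨_, _, _, derivN_truncEval a b l m n⟩

theorem derivN_mul (a b : ℂ) {Y Z : Matrix (Fin 3) (Fin 3) ℂ} (hY : Y ∈ frakB) (hZ : Z ∈ frakB) :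
    derivN a b (Y * Z) = derivN a b Y * Z + Y * derivN a b Z := by
  obtain ⟨l, m, n, rfl⟩ := mem_frakB_iff.1 hY
  obtain ⟨l', m', n', rfl⟩ := mem_frakB_iff.1 hZ
  simp only [truncEval_mul Nmat_pow_three, derivN_truncEval, truncEval_add]
  congr 1 <;> ring

theorem exists_derivN_truncEval_eq (l m n : ℂ) :
    ∃ a b : ℂ, derivN a b (truncEval Nmat l m n) = n • Nmat ^ 2 := by
  obtain ⟨a, b, hN, hN2⟩ : ∃ a b : ℂ, m * a = 0 ∧ m * b + 2 * a * n = n := by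
    rcases eq_or_ne m 0 with rfl | hm
    · exact ⟨1 / 2, 0, by ring, by ring⟩
    · exact ⟨0, n / m, by ring, by field_simp; ring⟩
  refine ⟨a, b, ?_⟩
  rw [derivN_truncEval, hN, hN2, truncEval, zero_smul, zero_smul, zero_add, zero_add]

/-- The map `δ(λ·1 + μ·N + ν·N²) = ν·N²` on `𝔅` is a local derivation: for every
`X ∈ 𝔅` there is a (linear) derivation `d` of `𝔅` with `δ X = d X`. -/
theorem delta_is_local_derivation :
    ∀ lam mu nu : ℂ,
      ∃ d : Matrix (Fin 3) (Fin 3) ℂ →ₗ[ℂ] Matrix (Fin 3) (Fin 3) ℂ,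
        Set.MapsTo d frakB frakB ∧
        (∀ Y ∈ frakB, ∀ Z ∈ frakB, d (Y * Z) = d Y * Z + Y * d Z) ∧
        d (lam • 1 + mu • Nmat + nu • Nmat ^ 2) = nu • Nmat ^ 2 := by
  intro lam mu nu
  obtain ⟨a, b, hd⟩ := exists_derivN_truncEval_eq lam mu nu
  exact ⟨derivN a b, mapsTo_derivN a b, fun Y hY Z hZ => derivN_mul a b hY hZ, hd⟩
end

section
/- Let E and V be locally compact Hausdorff topological spaces, let s : E → V be a local homeomorphism, and let K ⊆ E be compact. Then there exists n ∈ ℕ such that for every continuous function F : E → ℂ with support contained in K, one has sup_{v ∈ V} ( Σ_{e ∈ s⁻¹(v)} |F(e)|² )^{1/2} ≤ n · sup_{e ∈ E} |F(e)|. (Since s is a local homeomorphism and supp F ⊆ K is compact, for each v ∈ V only finitely many terms of the sum Σ_{e ∈ s⁻¹(v)} |F(e)|² are nonzero, so the sum is finite.) -/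
/-- Let `s : E → V` be a local homeomorphism between locally compact Hausdorff
spaces and `K ⊆ E` compact.  Then there is an `n ∈ ℕ` such that for every
continuous `F : E → ℂ` supported in `K`, for each `v ∈ V` the fiber sum
`Σ_{e ∈ s⁻¹(v)} |F e|²` has only finitely many nonzero terms and
`( Σ_{e ∈ s⁻¹(v)} |F e|² )^{1/2} ≤ n · sup_e |F e|`. -/
theorem graph_norm_le_sup_norm_on_compact
    {E V : Type*} [TopologicalSpace E] [LocallyCompactSpace E] [T2Space E]
    [TopologicalSpace V] [LocallyCompactSpace V] [T2Space V]
    (s : E → V) (hs : IsLocalHomeomorph s)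
    (K : Set E) (hK : IsCompact K) :
    ∃ n : ℕ, ∀ F : E → ℂ, Continuous F → tsupport F ⊆ K →
      ∀ v : V,
        (Function.support F ∩ s ⁻¹' {v}).Finite ∧
        Real.sqrt (∑' e : (s ⁻¹' {v} : Set E), ‖F (e : E)‖ ^ 2) ≤
          (n : ℝ) * ⨆ x : E, ‖F x‖ := by
  classical
  choose e he hse using fun x => hs x
  set U : E → Set E := fun x => (e x).source with hU
  have hUopen : ∀ x, IsOpen (U x) := fun x => (e x).open_source
  have hUinj : ∀ x, Set.InjOn s (U x) := fun x => by
    rw [hse x]; exact (e x).injOn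
  obtain ⟨t, ht⟩ := hK.elim_finite_subcover U hUopen
    (fun x hx => Set.mem_iUnion.2 ⟨x, he x⟩)
  refine ⟨t.card, fun F hFc hFsupp v => ?_⟩
  set S : Set E := Function.support F ∩ s ⁻¹' {v} with hSdef
  -- choice of covering index
  set g : E → E := fun a => if h : ∃ x ∈ t, a ∈ U x then h.choose else a with hg
  have hgspec : ∀ a ∈ S, g a ∈ t ∧ a ∈ U (g a) := by
    intro a ha
    have haK : a ∈ K := hFsupp (subset_tsupport F ha.1)
    have h : ∃ x ∈ t, a ∈ U x := by
      simpa using Set.mem_iUnion₂.1 (ht haK)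
    simp only [hg, dif_pos h]
    exact h.choose_spec
  have hginj : Set.InjOn g S := by
    intro a ha b hb hab
    have h1 := hgspec a ha
    have h2 := hgspec b hb
    have hb' : b ∈ U (g a) := hab ▸ h2.2
    exact hUinj (g a) h1.2 hb'
      ((show s a = v from ha.2).trans (show s b = v from hb.2).symm)
  -- finiteness of S
  have hSsub : S ⊆ ⋃ x ∈ t, (U x ∩ s ⁻¹' {v}) := by
    intro a ha
    obtain ⟨h1, h2⟩ := hgspec a ha
    exact Set.mem_biUnion h1 ⟨h2, ha.2⟩
  have hSfin : S.Finite := by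
    refine Set.Finite.subset (Set.Finite.biUnion t.finite_toSet fun x _ => ?_) hSsub
    exact Set.Subsingleton.finite fun a ha b hb =>
      hUinj x ha.1 hb.1 ((show s a = v from ha.2).trans (show s b = v from hb.2).symm)
  refine ⟨hSfin, ?_⟩
  -- bound support and sup norm
  have hcs : HasCompactSupport F := hK.of_isClosed_subset (isClosed_tsupport F) hFsupp
  have hBdd : BddAbove (Set.range fun x => ‖F x‖) :=
    (hcs.norm.isCompact_range (hFc.norm)).bddAbove
  set M : ℝ := ⨆ x : E, ‖F x‖ with hM
  have hM0 : 0 ≤ M := Real.iSup_nonneg fun x => norm_nonneg _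
  have hle : ∀ x, ‖F x‖ ≤ M := fun x => le_ciSup hBdd x
  -- finite support of the fiber function
  set g2 : (s ⁻¹' {v} : Set E) → ℝ := fun a => ‖F (a : E)‖ ^ 2 with hg2
  have hsub2 : Function.support g2 ⊆ Subtype.val ⁻¹' S := by
    intro a ha
    have : F (a : E) ≠ 0 := by
      intro h; apply ha; simp [hg2, h]
    exact ⟨this, a.2⟩
  have hfin2 : (Function.support g2).Finite :=
    (hSfin.preimage (Subtype.val_injective.injOn)).subset hsub2
  set T : Finset (s ⁻¹' {v} : Set E) := hfin2.toFinset with hT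
  have htsum : (∑' a : (s ⁻¹' {v} : Set E), ‖F (a : E)‖ ^ 2) = ∑ a ∈ T, g2 a := by
    refine tsum_eq_sum fun a ha => ?_
    by_contra h
    exact ha (hfin2.mem_toFinset.2 h)
  have hcardT : T.card ≤ hSfin.toFinset.card := by
    refine Finset.card_le_card_of_injOn Subtype.val (fun a ha => ?_)
      (Subtype.val_injective.injOn)
    exact hSfin.mem_toFinset.2 (hsub2 (hfin2.mem_toFinset.1 ha))
  have hcardS : hSfin.toFinset.card ≤ t.card := by
    refine Finset.card_le_card_of_injOn g (fun a ha => (hgspec a (hSfin.mem_toFinset.1 ha)).1) ?_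
    intro a ha b hb hab
    exact hginj (hSfin.mem_toFinset.1 ha) (hSfin.mem_toFinset.1 hb) hab
  have hsum_le : ∑ a ∈ T, g2 a ≤ (T.card : ℝ) * M ^ 2 := by
    have := Finset.sum_le_card_nsmul T g2 (M ^ 2) fun a _ =>
      pow_le_pow_left₀ (norm_nonneg _) (hle a) 2
    simpa [nsmul_eq_mul] using this
  have hcard : (T.card : ℝ) ≤ (t.card : ℝ) := by
    exact_mod_cast le_trans hcardT hcardS
  have key : (∑' a : (s ⁻¹' {v} : Set E), ‖F (a : E)‖ ^ 2) ≤ ((t.card : ℝ) * M) ^ 2 := by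
    rw [htsum, mul_pow]
    calc ∑ a ∈ T, g2 a ≤ (T.card : ℝ) * M ^ 2 := hsum_le
      _ ≤ (t.card : ℝ) * M ^ 2 := by
          exact mul_le_mul_of_nonneg_right hcard (sq_nonneg M)
      _ ≤ (t.card : ℝ) ^ 2 * M ^ 2 := by
          have : (t.card : ℝ) ≤ (t.card : ℝ) ^ 2 := by
            exact_mod_cast Nat.le_self_pow two_ne_zero t.card
          exact mul_le_mul_of_nonneg_right this (sq_nonneg M)
  calc Real.sqrt (∑' a : (s ⁻¹' {v} : Set E), ‖F (a : E)‖ ^ 2)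
      ≤ Real.sqrt (((t.card : ℝ) * M) ^ 2) := Real.sqrt_le_sqrt key
    _ = (t.card : ℝ) * M := Real.sqrt_sq (by positivity)
end

section
/- Let Y be a locally compact Hausdorff space, let S₁, S₂ ⊆ Y be closed subsets, let F : Y → ℂ be a continuous function with compact support that vanishes at every point of S₁ ∩ S₂, and let ε > 0. Then there exist continuous functions F₁, F₂ : Y → ℂ with compact supports contained in the support of F, such that F₁ vanishes at every point of S₁, F₂ vanishes at every point of S₂, and sup_{y ∈ Y} |F(y) − F₁(y) − F₂(y)| ≤ ε. -/
open Set

/-- If `F` is a continuous compactly supported function on a locally compact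
Hausdorff space `Y` vanishing on `S₁ ∩ S₂` (with `S₁, S₂` closed), then for any
`ε > 0` we can write `F`, up to `ε` in the sup norm, as `F₁ + F₂` with `Fᵢ`
continuous, supported inside the support of `F`, and `Fᵢ` vanishing on `Sᵢ`. -/
theorem vanishing_on_intersection_approx_sum
    {Y : Type*} [TopologicalSpace Y] [LocallyCompactSpace Y] [T2Space Y]
    (S₁ S₂ : Set Y) (hS₁ : IsClosed S₁) (hS₂ : IsClosed S₂)
    (F : Y → ℂ) (hF : Continuous F) (hFc : HasCompactSupport F)
    (hvan : ∀ y ∈ S₁ ∩ S₂, F y = 0)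
    (ε : ℝ) (hε : 0 < ε) :
    ∃ F₁ F₂ : Y → ℂ,
      Continuous F₁ ∧ Continuous F₂ ∧
      HasCompactSupport F₁ ∧ HasCompactSupport F₂ ∧
      tsupport F₁ ⊆ tsupport F ∧ tsupport F₂ ⊆ tsupport F ∧
      (∀ y ∈ S₁, F₁ y = 0) ∧ (∀ y ∈ S₂, F₂ y = 0) ∧
      ∀ y : Y, ‖F y - F₁ y - F₂ y‖ ≤ ε := by
  -- the scaling function `g`
  set g : ℝ → ℝ := fun t => max (t - ε) 0 / max t ε with hg
  have hgcont : Continuous g := by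
    apply Continuous.div ((continuous_id.sub continuous_const).max continuous_const)
      (continuous_id.max continuous_const)
    intro t
    exact ne_of_gt (lt_of_lt_of_le hε (le_max_right _ _))
  have hg0 : ∀ t : ℝ, t ≤ ε → g t = 0 := by
    intro t ht
    show max (t - ε) 0 / max t ε = 0
    rw [max_eq_right (by linarith), zero_div]
  -- the truncation `G`
  set G : Y → ℂ := fun y => (g ‖F y‖ : ℂ) * F y with hGdef
  have hGcont : Continuous G :=
    (Complex.continuous_ofReal.comp (hgcont.comp hF.norm)).mul hF
  have hGsupp : Function.support G ⊆ Function.support F := by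
    intro y hy
    simp only [Function.mem_support] at hy ⊢
    intro h; apply hy; show (g ‖F y‖ : ℂ) * F y = 0; rw [h, mul_zero]
  have hGts : tsupport G ⊆ tsupport F := closure_mono hGsupp
  have hGc : HasCompactSupport G := hFc.mono' (hGsupp.trans subset_closure)
  have hGzero : ∀ y : Y, ‖F y‖ ≤ ε → G y = 0 := by
    intro y h
    show (g ‖F y‖ : ℂ) * F y = 0
    rw [hg0 _ h]; simp
  -- error estimate for `F - G`
  have hest : ∀ y, ‖F y - G y‖ ≤ ε := by
    intro y
    rcases le_or_gt ‖F y‖ ε with h | h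
    · rw [hGzero y h, sub_zero]; exact h
    · have ht : (0:ℝ) < ‖F y‖ := lt_trans hε h
      have hmax : max ‖F y‖ ε = ‖F y‖ := max_eq_left h.le
      have hmax2 : max (‖F y‖ - ε) 0 = ‖F y‖ - ε := max_eq_left (by linarith)
      have hFG : F y - G y = ((1 - g ‖F y‖ : ℝ) : ℂ) * F y := by
        push_cast [hGdef]; ring
      have hgv : g ‖F y‖ = (‖F y‖ - ε) / ‖F y‖ := by
        show max (‖F y‖ - ε) 0 / max ‖F y‖ ε = _
        rw [hmax, hmax2]
      have h1 : (1 : ℝ) - (‖F y‖ - ε) / ‖F y‖ = ε / ‖F y‖ := by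
        rw [sub_div, div_self ht.ne']; ring
      rw [hFG, norm_mul, hgv, h1, Complex.norm_real, Real.norm_eq_abs,
        abs_of_nonneg (div_nonneg hε.le ht.le), div_mul_cancel₀ _ ht.ne']
  -- the compact sets to separate
  set K₁ : Set Y := S₁ ∩ {y | ε ≤ ‖F y‖} with hK₁
  set K₂ : Set Y := S₂ ∩ {y | ε ≤ ‖F y‖} with hK₂
  have hclosed : IsClosed {y | ε ≤ ‖F y‖} := isClosed_le continuous_const hF.norm
  have hsub : {y | ε ≤ ‖F y‖} ⊆ tsupport F := by
    intro y hy
    apply subset_closure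
    simp only [Function.mem_support]
    intro h
    simp only [mem_setOf_eq, h, norm_zero] at hy
    linarith
  have hK₁c : IsCompact K₁ :=
    hFc.isCompact.of_isClosed_subset (hS₁.inter hclosed) (fun y hy => hsub hy.2)
  have hK₂closed : IsClosed K₂ := hS₂.inter hclosed
  have hdisj : Disjoint K₁ K₂ := by
    rw [Set.disjoint_left]
    rintro y ⟨hy1, hy⟩ ⟨hy2, -⟩
    have := hvan y ⟨hy1, hy2⟩
    simp only [mem_setOf_eq, this, norm_zero] at hy
    linarith
  obtain ⟨φ, hφ0, hφ1, hφicc⟩ := exists_continuous_zero_one_of_isCompact hK₁c hK₂closed hdisj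
  have hsupp1 : Function.support (fun y => (φ y : ℂ) * G y) ⊆ Function.support G := by
    intro y hy
    simp only [Function.mem_support] at hy ⊢
    intro h; apply hy; rw [h, mul_zero]
  have hsupp2 : Function.support (fun y => ((1 - φ y : ℝ) : ℂ) * G y) ⊆ Function.support G := by
    intro y hy
    simp only [Function.mem_support] at hy ⊢
    intro h; apply hy; rw [h, mul_zero]
  refine ⟨fun y => (φ y : ℂ) * G y, fun y => ((1 - φ y : ℝ) : ℂ) * G y,
    ?_, ?_, ?_, ?_, ?_, ?_, ?_, ?_, ?_⟩
  · exact (Complex.continuous_ofReal.comp φ.continuous).mul hGcont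
  · exact (Complex.continuous_ofReal.comp (continuous_const.sub φ.continuous)).mul hGcont
  · exact hGc.mono' (hsupp1.trans subset_closure)
  · exact hGc.mono' (hsupp2.trans subset_closure)
  · exact subset_trans (closure_mono hsupp1) hGts
  · exact subset_trans (closure_mono hsupp2) hGts
  · intro y hy
    show (φ y : ℂ) * G y = 0
    rcases le_or_gt ‖F y‖ ε with h | h
    · rw [hGzero y h, mul_zero]
    · rw [show φ y = 0 from hφ0 ⟨hy, le_of_lt h⟩]
      push_cast; rw [zero_mul]
  · intro y hy
    show ((1 - φ y : ℝ) : ℂ) * G y = 0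
    rcases le_or_gt ‖F y‖ ε with h | h
    · rw [hGzero y h, mul_zero]
    · rw [show φ y = 1 from hφ1 ⟨hy, le_of_lt h⟩]
      push_cast; rw [sub_self, zero_mul]
  · intro y
    have heq : F y - (φ y : ℂ) * G y - ((1 - φ y : ℝ) : ℂ) * G y = F y - G y := by
      push_cast; ring
    rw [heq]
    exact hest y
end
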